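/- arXiv:2509.06220 — 5 statements merged into one kernel-verified Lean document; each statement's English description precedes it below -/
import Mathlib

section
/- Let x_1,…,x_n be nonzero reals, f_1 = |x_1|, f_i = √(f_{i-1}² + x_i²). Suppose \underline{f}_1 = f_1 and for i ≥ 2, \underline{f}_i = √(\underline{f}_{i-1}² + x_i²)(1+ε_i') with |ε_i'| ≤ ε, 0 ≤ ε < 1. Then \underline{f}_i = f_i(1+ε_i) where the relative error factor satisfies 1+ε_i^- ≤ 1+ε_i ≤ 1+ε_i^+ with ε_1^± = 0, 1+ε_i^- = √(1+ε_{i-1}^-(2+ε_{i-1}^-))(1-ε), 1+ε_i^+ = √(1+ε_{i-1}^+(2+ε_{i-1}^+))(1+ε), provided ε_{i-1}^- ≥ -1 at each step. -/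
set_option maxHeartbeats 1000000 in
/-- Error bounds for the iterative hypot-based Frobenius norm accumulation
(Theorem 2). -/
theorem stmt4 (n : ℕ) (x f uf ε' εm εp : ℕ → ℝ) (ε : ℝ)
    (hε0 : 0 ≤ ε) (hε1 : ε < 1)
    (hx : ∀ i, 1 ≤ i → i ≤ n → x i ≠ 0)
    (hf1 : f 1 = |x 1|)
    (hf : ∀ i, 2 ≤ i → i ≤ n → f i = Real.sqrt ((f (i - 1)) ^ 2 + (x i) ^ 2))
    (huf1 : uf 1 = f 1)
    (huf : ∀ i, 2 ≤ i → i ≤ n →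
      uf i = Real.sqrt ((uf (i - 1)) ^ 2 + (x i) ^ 2) * (1 + ε' i))
    (hε' : ∀ i, 2 ≤ i → i ≤ n → |ε' i| ≤ ε)
    (hεm1 : εm 1 = 0) (hεp1 : εp 1 = 0)
    (hεm : ∀ i, 2 ≤ i →
      1 + εm i = Real.sqrt (1 + εm (i - 1) * (2 + εm (i - 1))) * (1 - ε))
    (hεp : ∀ i, 2 ≤ i →
      1 + εp i = Real.sqrt (1 + εp (i - 1) * (2 + εp (i - 1))) * (1 + ε))
    (hinv : ∀ i, 1 ≤ i → i ≤ n → -1 ≤ εm i) :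
    ∀ i, 1 ≤ i → i ≤ n → ∃ εi : ℝ, uf i = f i * (1 + εi) ∧
      1 + εm i ≤ 1 + εi ∧ 1 + εi ≤ 1 + εp i := by
  -- positivity of f
  have hfpos : ∀ i, 1 ≤ i → i ≤ n → 0 < f i := by
    intro i hi
    induction i, hi using Nat.le_induction with
    | base =>
      intro h1
      rw [hf1]
      exact abs_pos.2 (hx 1 le_rfl h1)
    | succ i hi ih =>
      intro hin
      have hfi := ih (by omega)
      have hxne := hx (i + 1) (by omega) hin
      have h := hf (i + 1) (by omega) hin
      simp only [Nat.add_sub_cancel] at h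
      rw [h]
      exact Real.sqrt_pos.2 (by positivity)
  -- εp nonneg
  have hεpnn : ∀ i, 1 ≤ i → 0 ≤ εp i := by
    intro i hi
    induction i, hi using Nat.le_induction with
    | base => simp [hεp1]
    | succ i hi ih =>
      have h := hεp (i + 1) (by omega)
      simp only [Nat.add_sub_cancel] at h
      rw [show 1 + εp i * (2 + εp i) = (1 + εp i) ^ 2 by ring,
        Real.sqrt_sq (by linarith)] at h
      nlinarith
  -- εm nonpos (on range)
  have hεmnp : ∀ i, 1 ≤ i → i ≤ n → εm i ≤ 0 := by
    intro i hi
    induction i, hi using Nat.le_induction with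
    | base => intro _; simp [hεm1]
    | succ i hi ih =>
      intro hin
      have hmi := ih (by omega)
      have hmi' := hinv i hi (by omega)
      have h := hεm (i + 1) (by omega)
      simp only [Nat.add_sub_cancel] at h
      rw [show 1 + εm i * (2 + εm i) = (1 + εm i) ^ 2 by ring,
        Real.sqrt_sq (by linarith)] at h
      nlinarith
  intro i hi
  induction i, hi using Nat.le_induction with
  | base =>
    intro h1
    exact ⟨0, by rw [huf1]; ring, by simp [hεm1], by simp [hεp1]⟩
  | succ i hi ih =>
    intro hin
    have hiin : i ≤ n := by omega
    obtain ⟨e, hue, hml, hpu⟩ := ih hiin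
    have hc0 : 0 ≤ 1 + εm i := by linarith [hinv i hi hiin]
    have ha0 : 0 ≤ 1 + e := le_trans hc0 hml
    have hb1 : (1 : ℝ) ≤ 1 + εp i := by linarith [hεpnn i hi]
    have hc1 : 1 + εm i ≤ 1 := by linarith [hεmnp i hi hiin]
    have hfp : 0 < f (i + 1) := hfpos (i + 1) (by omega) hin
    have hfip : 0 < f i := hfpos i hi hiin
    have hX : 0 < x (i + 1) ^ 2 := by
      have := hx (i + 1) (by omega) hin; positivity
    have hfeq : f (i + 1) = Real.sqrt (f i ^ 2 + x (i + 1) ^ 2) := by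
      have h := hf (i + 1) (by omega) hin
      simpa using h
    have hufeq : uf (i + 1) =
        Real.sqrt ((f i * (1 + e)) ^ 2 + x (i + 1) ^ 2) * (1 + ε' (i + 1)) := by
      have h := huf (i + 1) (by omega) hin
      simp only [Nat.add_sub_cancel] at h
      rw [h, hue]
    have hε'b := abs_le.mp (hε' (i + 1) (by omega) hin)
    have hm' : 1 + εm (i + 1) = (1 + εm i) * (1 - ε) := by
      have h := hεm (i + 1) (by omega)
      simp only [Nat.add_sub_cancel] at h
      rw [show 1 + εm i * (2 + εm i) = (1 + εm i) ^ 2 by ring,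
        Real.sqrt_sq hc0] at h
      exact h
    have hp' : 1 + εp (i + 1) = (1 + εp i) * (1 + ε) := by
      have h := hεp (i + 1) (by omega)
      simp only [Nat.add_sub_cancel] at h
      rw [show 1 + εp i * (2 + εp i) = (1 + εp i) ^ 2 by ring,
        Real.sqrt_sq (by linarith)] at h
      exact h
    have hab : (1 + e) * (1 + e) ≤ (1 + εp i) * (1 + εp i) :=
      mul_le_mul hpu hpu ha0 (by linarith)
    have hca : (1 + εm i) * (1 + εm i) ≤ (1 + e) * (1 + e) :=
      mul_le_mul hml hml hc0 ha0
    -- upper bound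
    have hup : uf (i + 1) ≤ f (i + 1) * (1 + εp (i + 1)) := by
      rw [hufeq, hfeq, hp']
      have h1 : Real.sqrt ((f i * (1 + e)) ^ 2 + x (i + 1) ^ 2) ≤
          Real.sqrt (f i ^ 2 + x (i + 1) ^ 2) * (1 + εp i) := by
        rw [show Real.sqrt (f i ^ 2 + x (i + 1) ^ 2) * (1 + εp i)
            = Real.sqrt ((f i ^ 2 + x (i + 1) ^ 2) * (1 + εp i) ^ 2) by
          rw [Real.sqrt_mul (by positivity), Real.sqrt_sq (by linarith)]]
        apply Real.sqrt_le_sqrt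
        have h4 := mul_le_mul_of_nonneg_left hab (sq_nonneg (f i))
        have hbb : (1 : ℝ) * 1 ≤ (1 + εp i) * (1 + εp i) :=
          mul_le_mul hb1 hb1 zero_le_one (by linarith)
        have h5 : x (i + 1) ^ 2 * 1 ≤ x (i + 1) ^ 2 * ((1 + εp i) * (1 + εp i)) :=
          mul_le_mul_of_nonneg_left (by linarith) hX.le
        nlinarith [h4, h5]
      have h2 : (1 : ℝ) + ε' (i + 1) ≤ 1 + ε := by linarith [hε'b.2]
      have h3 : (0 : ℝ) ≤ 1 + ε' (i + 1) := by linarith [hε'b.1]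
      calc Real.sqrt ((f i * (1 + e)) ^ 2 + x (i + 1) ^ 2) * (1 + ε' (i + 1))
          ≤ Real.sqrt (f i ^ 2 + x (i + 1) ^ 2) * (1 + εp i) * (1 + ε) :=
            mul_le_mul h1 h2 h3 (by positivity)
        _ = Real.sqrt (f i ^ 2 + x (i + 1) ^ 2) * ((1 + εp i) * (1 + ε)) := by
            ring
    -- lower bound
    have hlo : f (i + 1) * (1 + εm (i + 1)) ≤ uf (i + 1) := by
      rw [hufeq, hfeq, hm']
      have h1 : Real.sqrt (f i ^ 2 + x (i + 1) ^ 2) * (1 + εm i) ≤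
          Real.sqrt ((f i * (1 + e)) ^ 2 + x (i + 1) ^ 2) := by
        rw [show Real.sqrt (f i ^ 2 + x (i + 1) ^ 2) * (1 + εm i)
            = Real.sqrt ((f i ^ 2 + x (i + 1) ^ 2) * (1 + εm i) ^ 2) by
          rw [Real.sqrt_mul (by positivity), Real.sqrt_sq hc0]]
        apply Real.sqrt_le_sqrt
        have h4 := mul_le_mul_of_nonneg_left hca (sq_nonneg (f i))
        have hcc : (1 + εm i) * (1 + εm i) ≤ 1 * 1 :=
          mul_le_mul hc1 hc1 hc0 zero_le_one
        have h5 : x (i + 1) ^ 2 * ((1 + εm i) * (1 + εm i)) ≤ x (i + 1) ^ 2 * 1 :=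
          mul_le_mul_of_nonneg_left (by linarith) hX.le
        nlinarith [h4, h5]
      have h2 : (1 : ℝ) - ε ≤ 1 + ε' (i + 1) := by linarith [hε'b.1]
      have h3 : (0 : ℝ) ≤ 1 - ε := by linarith
      calc Real.sqrt (f i ^ 2 + x (i + 1) ^ 2) * ((1 + εm i) * (1 - ε))
          = Real.sqrt (f i ^ 2 + x (i + 1) ^ 2) * (1 + εm i) * (1 - ε) := by
            ring
        _ ≤ Real.sqrt ((f i * (1 + e)) ^ 2 + x (i + 1) ^ 2) * (1 + ε' (i + 1)) :=
            mul_le_mul h1 h2 h3 (Real.sqrt_nonneg _)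
    refine ⟨uf (i + 1) / f (i + 1) - 1, ?_, ?_, ?_⟩
    · field_simp
      ring
    · rw [show 1 + (uf (i + 1) / f (i + 1) - 1) = uf (i + 1) / f (i + 1) by ring,
        le_div_iff₀ hfp]
      linarith [hlo]
    · rw [show 1 + (uf (i + 1) / f (i + 1) - 1) = uf (i + 1) / f (i + 1) by ring,
        div_le_iff₀ hfp]
      linarith [hup]
end

section
/- Let f_p, f_q ≥ 0 not both zero, f_n = √(f_p² + f_q²). Suppose \underline{f}_p = f_p(1+ε_p), \underline{f}_q = f_q(1+ε_q) with 1+ε_p ≥ 0, 1+ε_q ≥ 0. Set 1+ε_l = min{1+ε_p, 1+ε_q}, 1+ε_k = max{1+ε_p, 1+ε_q} > 0, 1+ε_/ = (1+ε_l)/(1+ε_k), and let f_l be the operand paired with ε_l. Then \underline{f}_p² + \underline{f}_q² = f_n²·(1 + ε_/(2+ε_/)·f_l²/f_n²)·(1+ε_k)². -/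
/-- Combining identity (equations (9)-(10)) at an internal node of the
recursive hypot-based norm computation (Theorem 3). -/
theorem stmt8 (fp fq εp εq ufp ufq : ℝ)
    (hfp : 0 ≤ fp) (hfq : 0 ≤ fq) (hne : ¬(fp = 0 ∧ fq = 0))
    (hufp : ufp = fp * (1 + εp)) (hufq : ufq = fq * (1 + εq))
    (hεp : 0 ≤ 1 + εp) (hεq : 0 ≤ 1 + εq)
    (hk : 0 < max (1 + εp) (1 + εq)) :
    let fn := Real.sqrt (fp ^ 2 + fq ^ 2)
    let εl := min (1 + εp) (1 + εq) - 1
    let εk := max (1 + εp) (1 + εq) - 1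
    let εd := (1 + εl) / (1 + εk) - 1
    let fl := if 1 + εp ≤ 1 + εq then fp else fq
    ufp ^ 2 + ufq ^ 2
      = fn ^ 2 * (1 + εd * (2 + εd) * fl ^ 2 / fn ^ 2) * (1 + εk) ^ 2 := by
  intro fn εl εk εd fl
  have hfn2 : 0 < fp ^ 2 + fq ^ 2 := by
    rcases not_and_or.mp hne with h | h
    · have : 0 < fp ^ 2 := by positivity
      nlinarith [sq_nonneg fq]
    · have : 0 < fq ^ 2 := by positivity
      nlinarith [sq_nonneg fp]
  have hfn : fn ^ 2 = fp ^ 2 + fq ^ 2 := Real.sq_sqrt hfn2.le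
  subst hufp hufq
  by_cases h : 1 + εp ≤ 1 + εq
  · have hmax : max (1 + εp) (1 + εq) = 1 + εq := max_eq_right h
    have hq : (1 : ℝ) + εq ≠ 0 := by rw [hmax] at hk; linarith
    simp only [fl, εl, εk, εd, if_pos h, min_eq_left h, hmax, hfn]
    simp only [add_sub_cancel_left]
    field_simp
    ring
  · have h' : 1 + εq ≤ 1 + εp := le_of_not_ge h
    have hmax : max (1 + εp) (1 + εq) = 1 + εp := max_eq_left h'
    have hp : (1 : ℝ) + εp ≠ 0 := by rw [hmax] at hk; linarith
    simp only [fl, εl, εk, εd, if_neg h, min_eq_right h', hmax, hfn]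
    simp only [add_sub_cancel_left]
    field_simp
    ring
end

section
/- With the notation of the recursive combining step (Theorem 3), if additionally \underline{f}_n = √(\underline{f}_p² + \underline{f}_q²)(1+ε_n') with |ε_n'| ≤ ε', then \underline{f}_n = f_n(1+ε_n) where 1+ε_n = √(1 + ε_/(2+ε_/)·f_l²/f_n²)·(1+ε_k)·(1+ε_n'). -/
lemma aux9 (fp fq a b : ℝ) (hfp : 0 ≤ fp) (hfq : 0 ≤ fq) (ha : 0 ≤ a) (hb : 0 < b)
    (hsum : 0 < fp ^ 2 + fq ^ 2) :
    Real.sqrt ((fp * a) ^ 2 + (fq * b) ^ 2) =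
      Real.sqrt (fp ^ 2 + fq ^ 2) *
        (Real.sqrt (1 + (a / b - 1) * (2 + (a / b - 1)) * fp ^ 2 /
            (Real.sqrt (fp ^ 2 + fq ^ 2)) ^ 2) * b) := by
  set fn := Real.sqrt (fp ^ 2 + fq ^ 2) with hfn
  have hfn2 : fn ^ 2 = fp ^ 2 + fq ^ 2 := Real.sq_sqrt hsum.le
  have hfnpos : 0 < fn := Real.sqrt_pos.mpr hsum
  set E := 1 + (a / b - 1) * (2 + (a / b - 1)) * fp ^ 2 / fn ^ 2 with hEdef
  have hE : E = ((fp * a) ^ 2 + (fq * b) ^ 2) / ((fp ^ 2 + fq ^ 2) * b ^ 2) := by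
    rw [hEdef, hfn2]
    field_simp
    ring
  have hEnn : 0 ≤ E := by rw [hE]; positivity
  have hsq : (fp * a) ^ 2 + (fq * b) ^ 2 = (fn * (Real.sqrt E * b)) ^ 2 := by
    have hsE : Real.sqrt E ^ 2 = E := Real.sq_sqrt hEnn
    have : (fn * (Real.sqrt E * b)) ^ 2 = (fp ^ 2 + fq ^ 2) * (E * b ^ 2) := by
      rw [mul_pow, mul_pow, hsE, hfn2]
    rw [this, hE]
    field_simp
  rw [hsq, Real.sqrt_sq (by positivity)]

/-- Relative error factor of the recursive combining step (Theorem 3, eq. (7)). -/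
theorem stmt9 (fp fq εp εq ufp ufq ufn εn' ε' : ℝ)
    (hfp : 0 ≤ fp) (hfq : 0 ≤ fq) (hne : ¬(fp = 0 ∧ fq = 0))
    (hufp : ufp = fp * (1 + εp)) (hufq : ufq = fq * (1 + εq))
    (hεp : 0 ≤ 1 + εp) (hεq : 0 ≤ 1 + εq)
    (hk : 0 < max (1 + εp) (1 + εq))
    (hεn' : |εn'| ≤ ε')
    (hufn : ufn = Real.sqrt (ufp ^ 2 + ufq ^ 2) * (1 + εn')) :
    let fn := Real.sqrt (fp ^ 2 + fq ^ 2)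
    let εl := min (1 + εp) (1 + εq) - 1
    let εk := max (1 + εp) (1 + εq) - 1
    let εd := (1 + εl) / (1 + εk) - 1
    let fl := if 1 + εp ≤ 1 + εq then fp else fq
    ufn = fn * (Real.sqrt (1 + εd * (2 + εd) * fl ^ 2 / fn ^ 2)
                  * (1 + εk) * (1 + εn')) := by
  intro fn εl εk εd fl
  have hsum : 0 < fp ^ 2 + fq ^ 2 := by
    rcases not_and_or.mp hne with h | h
    · have : 0 < fp ^ 2 := by positivity
      nlinarith [sq_nonneg fq]
    · have : 0 < fq ^ 2 := by positivity
      nlinarith [sq_nonneg fp]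
  subst hufp hufq hufn
  rcases le_total (1 + εp) (1 + εq) with h | h
  · have hmin : min (1 + εp) (1 + εq) = 1 + εp := min_eq_left h
    have hmax : max (1 + εp) (1 + εq) = 1 + εq := max_eq_right h
    have hb : 0 < 1 + εq := hmax ▸ hk
    have key := aux9 fp fq (1 + εp) (1 + εq) hfp hfq hεp hb hsum
    simp only [fl, εd, εk, εl, fn, hmin, hmax, if_pos h, sub_add_cancel,
      add_sub_cancel_left] at *
    rw [key]; ring
  · have hmin : min (1 + εp) (1 + εq) = 1 + εq := min_eq_right h
    have hmax : max (1 + εp) (1 + εq) = 1 + εp := max_eq_left h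
    have hb : 0 < 1 + εp := hmax ▸ hk
    have hsum' : 0 < fq ^ 2 + fp ^ 2 := by linarith
    have key := aux9 fq fp (1 + εq) (1 + εp) hfq hfp hεq hb hsum'
    by_cases hif : 1 + εp ≤ 1 + εq
    · have heq : 1 + εp = 1 + εq := le_antisymm hif h
      simp only [fl, εd, εk, εl, fn, hmin, hmax, if_pos hif, sub_add_cancel,
        add_sub_cancel_left] at *
      rw [add_comm (fq ^ 2) (fp ^ 2), heq] at key
      rw [heq]
      rw [show (fp * (1 + εq)) ^ 2 + (fq * (1 + εq)) ^ 2
            = (fq * (1 + εq)) ^ 2 + (fp * (1 + εq)) ^ 2 by ring, key]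
      have hq0 : (1 + εq) ≠ 0 := by rw [← heq]; exact hb.ne'
      have hd : ((1 + εq) / (1 + εq) - 1) = 0 := by field_simp; norm_num
      rw [hd]
      norm_num
      ring
    · simp only [fl, εd, εk, εl, fn, hmin, hmax, if_neg hif, sub_add_cancel,
        add_sub_cancel_left] at *
      rw [add_comm (fq ^ 2) (fp ^ 2)] at key
      rw [show (fp * (1 + εp)) ^ 2 + (fq * (1 + εq)) ^ 2
            = (fq * (1 + εq)) ^ 2 + (fp * (1 + εp)) ^ 2 by ring, key]
      ring
end

section
/- Consider the balanced recursive norm computation: an array of length n = 2^k (k ≥ 0) is split into two halves, each computed recursively, and combined by a hypot with relative error at most ε' per call; a length-1 array returns the exact absolute value. Then the relative error factor of the result satisfies (1-ε')^k ≤ (computed norm)/(true norm) ≤ (1+ε')^k, assuming the true norm is positive. -/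
/-- `RecNorm ε' k x r` holds iff `r` is a possible result of the balanced
recursive norm computation on the array `x 0, …, x (2^k - 1)`, where each
internal node combines the two halves by a hypot with relative error at most
`ε'`, and a length-1 array returns the exact absolute value. -/
def RecNorm (ε' : ℝ) : ℕ → (ℕ → ℝ) → ℝ → Prop
  | 0, x, r => r = |x 0|
  | k + 1, x, r => ∃ rl rr δ : ℝ,
      RecNorm ε' k x rl ∧
      RecNorm ε' k (fun i => x (i + 2 ^ k)) rr ∧
      |δ| ≤ ε' ∧
      r = Real.sqrt (rl ^ 2 + rr ^ 2) * (1 + δ)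

lemma recnorm_bounds (ε' : ℝ) (hε0 : 0 ≤ ε') (hε1 : ε' < 1) :
    ∀ (k : ℕ) (x : ℕ → ℝ) (r : ℝ), RecNorm ε' k x r →
      (1 - ε') ^ k * Real.sqrt (∑ i ∈ Finset.range (2 ^ k), (x i) ^ 2) ≤ r ∧
      r ≤ (1 + ε') ^ k * Real.sqrt (∑ i ∈ Finset.range (2 ^ k), (x i) ^ 2) := by
  intro k
  induction k with
  | zero =>
    intro x r hr
    simp only [RecNorm] at hr
    simp [hr, Real.sqrt_sq_eq_abs]
  | succ k ih =>
    intro x r hr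
    obtain ⟨rl, rr, δ, hl, hrr, hδ, hrEq⟩ := hr
    obtain ⟨hl1, hl2⟩ := ih x rl hl
    obtain ⟨hr1, hr2⟩ := ih (fun i => x (i + 2 ^ k)) rr hrr
    set Nl := Real.sqrt (∑ i ∈ Finset.range (2 ^ k), (x i) ^ 2) with hNl
    set Nr := Real.sqrt (∑ i ∈ Finset.range (2 ^ k), (x (i + 2 ^ k)) ^ 2) with hNr
    have hNlnn : 0 ≤ Nl := Real.sqrt_nonneg _
    have hNrnn : 0 ≤ Nr := Real.sqrt_nonneg _
    have hsplit : (∑ i ∈ Finset.range (2 ^ (k + 1)), (x i) ^ 2)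
        = (∑ i ∈ Finset.range (2 ^ k), (x i) ^ 2)
          + ∑ i ∈ Finset.range (2 ^ k), (x (i + 2 ^ k)) ^ 2 := by
      have h2 : 2 ^ (k + 1) = 2 ^ k + 2 ^ k := by ring
      rw [h2, Finset.sum_range_add]
      simp [add_comm]
    have hsuml : 0 ≤ ∑ i ∈ Finset.range (2 ^ k), (x i) ^ 2 :=
      Finset.sum_nonneg fun i _ => sq_nonneg _
    have hsumr : 0 ≤ ∑ i ∈ Finset.range (2 ^ k), (x (i + 2 ^ k)) ^ 2 :=
      Finset.sum_nonneg fun i _ => sq_nonneg _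
    have hN : Real.sqrt (∑ i ∈ Finset.range (2 ^ (k + 1)), (x i) ^ 2)
        = Real.sqrt (Nl ^ 2 + Nr ^ 2) := by
      rw [hsplit, hNl, hNr, Real.sq_sqrt hsuml, Real.sq_sqrt hsumr]
    have h1mk : (0:ℝ) ≤ (1 - ε') ^ k := pow_nonneg (by linarith) k
    have h1pk : (0:ℝ) ≤ (1 + ε') ^ k := pow_nonneg (by linarith) k
    have hrlnn : 0 ≤ rl := le_trans (mul_nonneg h1mk hNlnn) hl1
    have hrrnn : 0 ≤ rr := le_trans (mul_nonneg h1mk hNrnn) hr1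
    -- bounds on sqrt(rl^2 + rr^2)
    have hupper : Real.sqrt (rl ^ 2 + rr ^ 2) ≤ (1 + ε') ^ k * Real.sqrt (Nl ^ 2 + Nr ^ 2) := by
      have : Real.sqrt (rl ^ 2 + rr ^ 2)
          ≤ Real.sqrt (((1 + ε') ^ k * Nl) ^ 2 + ((1 + ε') ^ k * Nr) ^ 2) := by
        apply Real.sqrt_le_sqrt
        have h1 : rl ^ 2 ≤ ((1 + ε') ^ k * Nl) ^ 2 := pow_le_pow_left₀ hrlnn hl2 2
        have h2 : rr ^ 2 ≤ ((1 + ε') ^ k * Nr) ^ 2 := pow_le_pow_left₀ hrrnn hr2 2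
        linarith
      calc Real.sqrt (rl ^ 2 + rr ^ 2)
          ≤ Real.sqrt (((1 + ε') ^ k) ^ 2 * (Nl ^ 2 + Nr ^ 2)) := by
            rw [show ((1 + ε') ^ k) ^ 2 * (Nl ^ 2 + Nr ^ 2)
              = ((1 + ε') ^ k * Nl) ^ 2 + ((1 + ε') ^ k * Nr) ^ 2 by ring]
            exact this
        _ = (1 + ε') ^ k * Real.sqrt (Nl ^ 2 + Nr ^ 2) := by
            rw [Real.sqrt_mul (sq_nonneg _), Real.sqrt_sq h1pk]
    have hlower : (1 - ε') ^ k * Real.sqrt (Nl ^ 2 + Nr ^ 2) ≤ Real.sqrt (rl ^ 2 + rr ^ 2) := by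
      have : Real.sqrt (((1 - ε') ^ k * Nl) ^ 2 + ((1 - ε') ^ k * Nr) ^ 2)
          ≤ Real.sqrt (rl ^ 2 + rr ^ 2) := by
        apply Real.sqrt_le_sqrt
        have h1 : ((1 - ε') ^ k * Nl) ^ 2 ≤ rl ^ 2 :=
          pow_le_pow_left₀ (mul_nonneg h1mk hNlnn) hl1 2
        have h2 : ((1 - ε') ^ k * Nr) ^ 2 ≤ rr ^ 2 :=
          pow_le_pow_left₀ (mul_nonneg h1mk hNrnn) hr1 2
        linarith
      calc (1 - ε') ^ k * Real.sqrt (Nl ^ 2 + Nr ^ 2)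
          = Real.sqrt (((1 - ε') ^ k) ^ 2 * (Nl ^ 2 + Nr ^ 2)) := by
            rw [Real.sqrt_mul (sq_nonneg _), Real.sqrt_sq h1mk]
        _ ≤ Real.sqrt (rl ^ 2 + rr ^ 2) := by
            rw [show ((1 - ε') ^ k) ^ 2 * (Nl ^ 2 + Nr ^ 2)
              = ((1 - ε') ^ k * Nl) ^ 2 + ((1 - ε') ^ k * Nr) ^ 2 by ring]
            exact this
    have hδl : 1 - ε' ≤ 1 + δ := by
      have := abs_le.mp hδ; linarith [this.1]
    have hδr : 1 + δ ≤ 1 + ε' := by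
      have := abs_le.mp hδ; linarith [this.2]
    have hsnn : 0 ≤ Real.sqrt (rl ^ 2 + rr ^ 2) := Real.sqrt_nonneg _
    have hNnn : 0 ≤ Real.sqrt (Nl ^ 2 + Nr ^ 2) := Real.sqrt_nonneg _
    rw [hN, hrEq]
    constructor
    · calc (1 - ε') ^ (k + 1) * Real.sqrt (Nl ^ 2 + Nr ^ 2)
          = ((1 - ε') ^ k * Real.sqrt (Nl ^ 2 + Nr ^ 2)) * (1 - ε') := by ring
        _ ≤ Real.sqrt (rl ^ 2 + rr ^ 2) * (1 - ε') :=
            mul_le_mul_of_nonneg_right hlower (by linarith)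
        _ ≤ Real.sqrt (rl ^ 2 + rr ^ 2) * (1 + δ) :=
            mul_le_mul_of_nonneg_left hδl hsnn
    · calc Real.sqrt (rl ^ 2 + rr ^ 2) * (1 + δ)
          ≤ Real.sqrt (rl ^ 2 + rr ^ 2) * (1 + ε') :=
            mul_le_mul_of_nonneg_left hδr hsnn
        _ ≤ ((1 + ε') ^ k * Real.sqrt (Nl ^ 2 + Nr ^ 2)) * (1 + ε') :=
            mul_le_mul_of_nonneg_right hupper (by linarith)
        _ = (1 + ε') ^ (k + 1) * Real.sqrt (Nl ^ 2 + Nr ^ 2) := by ring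

/-- Logarithmic error growth of the balanced recursive norm computation. -/
theorem stmt11 (ε' : ℝ) (hε0 : 0 ≤ ε') (hε1 : ε' < 1)
    (k : ℕ) (x : ℕ → ℝ) (r : ℝ) (hr : RecNorm ε' k x r)
    (hpos : 0 < Real.sqrt (∑ i ∈ Finset.range (2 ^ k), (x i) ^ 2)) :
    (1 - ε') ^ k ≤ r / Real.sqrt (∑ i ∈ Finset.range (2 ^ k), (x i) ^ 2) ∧
      r / Real.sqrt (∑ i ∈ Finset.range (2 ^ k), (x i) ^ 2) ≤ (1 + ε') ^ k := by
  obtain ⟨h1, h2⟩ := recnorm_bounds ε' hε0 hε1 k x r hr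
  constructor
  · rw [ge_iff_le.symm, ge_iff_le, le_div_iff₀ hpos]; linarith
  · rw [div_le_iff₀ hpos]; linarith
end

section
/- Under the iterative FMA accumulation bounds of Theorem 1 with ε ∈ (0,1), for every n ≥ 1 the upper relative error bound satisfies √((1+ε)^n)(1+ε) - 1 ≥ (n/2)·ε, showing at-least-linear growth in n; whereas the recursive balanced algorithm's upper bound (1+ε)^{⌈lg n⌉} - 1 ≤ e·⌈lg n⌉·ε whenever ⌈lg n⌉·ε ≤ 1. -/
lemma exp_le_aux (x : ℝ) (hx0 : 0 ≤ x) (hx1 : x ≤ 1) :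
    Real.exp x ≤ 1 + Real.exp 1 * x := by
  have h := convexOn_exp.2 (Set.mem_univ (0:ℝ)) (Set.mem_univ (1:ℝ))
    (by linarith : (0:ℝ) ≤ 1 - x) hx0 (by ring)
  simp only [smul_eq_mul, mul_zero, mul_one, zero_add, Real.exp_zero] at h
  nlinarith [Real.exp_one_gt_d9]

/-- Comparison of the worst-case relative error bounds of the iterative and
the recursive balanced algorithms: at-least-linear versus logarithmic growth. -/
theorem stmt14 (ε : ℝ) (hε0 : 0 < ε) (hε1 : ε < 1) :
    (∀ n : ℕ, 1 ≤ n →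
      (n : ℝ) / 2 * ε ≤ Real.sqrt ((1 + ε) ^ n) * (1 + ε) - 1) ∧
    (∀ n : ℕ, 1 ≤ n → (Nat.clog 2 n : ℝ) * ε ≤ 1 →
      (1 + ε) ^ (Nat.clog 2 n) - 1 ≤ Real.exp 1 * (Nat.clog 2 n : ℝ) * ε) := by
  have h1ε : (0:ℝ) < 1 + ε := by linarith
  constructor
  · intro n hn
    have hsq : Real.sqrt ((1 + ε) ^ n) * (1 + ε) = (1 + ε) ^ ((n : ℝ)/2 + 1) := by
      rw [Real.sqrt_eq_rpow, ← Real.rpow_natCast (1+ε) n, ← Real.rpow_mul h1ε.le,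
        Real.rpow_add h1ε]
      rw [Real.rpow_one]
      ring_nf
    rw [hsq]
    have hp : (1:ℝ) ≤ (n : ℝ)/2 + 1 := by
      have : (0:ℝ) ≤ (n:ℝ) := Nat.cast_nonneg n
      linarith
    have := one_add_mul_self_le_rpow_one_add (by linarith : (-1:ℝ) ≤ ε) hp
    have hpos : (0:ℝ) ≤ (n:ℝ)/2 := by positivity
    nlinarith
  · intro n hn hkε
    set k := Nat.clog 2 n with hk
    have hkn : (0:ℝ) ≤ (k:ℝ) * ε := by positivity
    have h1 : (1 + ε) ^ k ≤ Real.exp ((k:ℝ) * ε) := by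
      calc (1 + ε) ^ k ≤ (Real.exp ε) ^ k :=
            pow_le_pow_left₀ h1ε.le (by linarith [Real.add_one_le_exp ε]) k
        _ = Real.exp ((k:ℝ) * ε) := by rw [← Real.exp_nat_mul]
    have h2 := exp_le_aux ((k:ℝ) * ε) hkn hkε
    calc (1 + ε) ^ k - 1 ≤ Real.exp ((k:ℝ) * ε) - 1 := by linarith
      _ ≤ Real.exp 1 * ((k:ℝ) * ε) := by linarith
      _ = Real.exp 1 * (k:ℝ) * ε := by ring
end
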